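/- arXiv:1210.3460 — 3 statements merged into one kernel-verified Lean document; each statement's English description precedes it below -/
import Mathlib

section
/- For a > 0 and b ∈ ℝ, the Fourier transform of the translated Dirac comb δ_{aℤ+b} is (1/a) times the modulated comb ∑_k e^{-2πi b k / a} δ_{k/a}: for every Schwartz function g : ℝ → ℂ, ∑_{k ∈ ℤ} ĝ(a k + b) = (1/a) ∑_{k ∈ ℤ} e^{-2πi b k / a} g(k/a). -/
/-!
Apply Poisson summation `∑ f (x + n) = ∑ 𝓕 f n e^{2πinx}` to the dilate `x ↦ ĝ (a x)` at
`x = b / a`. The dilate has Fourier transform `ξ ↦ a⁻¹ 𝓕 ĝ (ξ / a) = a⁻¹ g (-ξ / a)` by Fourier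
inversion, and reindexing `n ↦ -n` gives the modulated comb.
-/

open scoped Real

noncomputable def fourierTransform (g : ℝ → ℂ) (ξ : ℝ) : ℂ :=
  ∫ x : ℝ, g x * Complex.exp (-2 * Real.pi * Complex.I * x * ξ)

open scoped FourierTransform SchwartzMap
open MeasureTheory

lemma fourierTransform_eq_fourier (g : ℝ → ℂ) : fourierTransform g = 𝓕 g := by
  ext ξ
  rw [fourierTransform, Real.fourier_real_eq_integral_exp_smul]
  congr with x
  rw [smul_eq_mul, mul_comm]
  push_cast
  ring_nf

theorem Real.fourier_comp_mul_left {E : Type*} [NormedAddCommGroup E] [NormedSpace ℂ E]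
    (f : ℝ → E) {a : ℝ} (ha : a ≠ 0) (ξ : ℝ) :
    𝓕 (fun x => f (a * x)) ξ = |a|⁻¹ • 𝓕 f (ξ / a) := by
  simp only [Real.fourier_real_eq]
  rw [← abs_inv, ← Measure.integral_comp_mul_left]
  congr with x
  field_simp

theorem SchwartzMap.fourier_fourier_apply {V E : Type*} [NormedAddCommGroup V]
    [InnerProductSpace ℝ V] [FiniteDimensional ℝ V] [MeasurableSpace V] [BorelSpace V]
    [NormedAddCommGroup E] [NormedSpace ℂ E] [CompleteSpace E] (f : 𝓢(V, E)) (x : V) :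
    𝓕 (𝓕 (f : V → E)) x = f (-x) := by
  rw [← neg_neg x, ← Real.fourierInv_eq_fourier_neg, neg_neg, ← SchwartzMap.fourier_coe,
    ← SchwartzMap.fourierInv_coe, FourierPair.fourierInv_fourier_eq]

theorem SchwartzMap.tsum_comp_mul_add_eq_tsum_fourier (f : 𝓢(ℝ, ℂ)) {a : ℝ} (ha : a ≠ 0)
    (b : ℝ) :
    ∑' n : ℤ, f (a * n + b) =
      |a|⁻¹ * ∑' n : ℤ,
        𝓕 (f : ℝ → ℂ) (n / a) * Complex.exp (2 * Real.pi * Complex.I * n * b / a) := by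
  let dilate : 𝓢(ℝ, ℂ) := SchwartzMap.compCLMOfContinuousLinearEquiv ℂ
    (ContinuousLinearEquiv.unitsEquivAut ℝ (Units.mk0 a ha)) f
  have h_dilate : (dilate : ℝ → ℂ) = fun x => f (a * x) :=
    funext fun x => by simp [dilate, mul_comm]
  have poisson := dilate.tsum_eq_tsum_fourier (b / a)
  rw [SchwartzMap.fourier_coe, h_dilate] at poisson
  simp only [Real.fourier_comp_mul_left f ha, fourier_coe_apply] at poisson
  rw [← tsum_mul_left]
  convert poisson using 1 <;> refine tsum_congr fun n => ?_
  · congr 1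
    field_simp
    ring
  · rw [Complex.real_smul]
    push_cast
    ring_nf

/-- The Fourier transform of the translated Dirac comb `δ_{aℤ+b}` is the
modulated comb `(1/a) ∑_k e^{-2πi b k/a} δ_{k/a}`. -/
theorem diracComb_translated (a b : ℝ) (ha : 0 < a) (g : SchwartzMap ℝ ℂ) :
    ∑' k : ℤ, fourierTransform (⇑g) (a * k + b) =
      (1 / (a : ℂ)) *
        ∑' k : ℤ, Complex.exp (-2 * Real.pi * Complex.I * b * k / a) * g (k / a) := by
  have poisson := (𝓕 g).tsum_comp_mul_add_eq_tsum_fourier ha.ne' b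
  rw [SchwartzMap.fourier_coe] at poisson
  simp only [fourierTransform_eq_fourier]
  rw [poisson, abs_of_pos ha, Complex.ofReal_inv, one_div, ← (Equiv.neg ℤ).tsum_eq]
  simp_rw [SchwartzMap.fourier_fourier_apply]
  congr 1
  refine tsum_congr fun n => ?_
  rw [Equiv.neg_apply, Int.cast_neg, neg_div, neg_neg, mul_comm]
  congr 2
  push_cast
  ring
end

section
/- Define Λ = ⋃_{n ≥ 0} (2·4ⁿ ℤ + (4ⁿ − 1)) ⊆ ℤ. Then the sets 2·4ⁿ ℤ + (4ⁿ − 1), for n ≥ 0, are pairwise disjoint. -/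
/-!
Every `x` in `2·4ⁿℤ + (4ⁿ - 1)` has `x + 1 = 2^(2n) · (odd)`, so `n` is determined by `x`:
it is half the `2`-adic valuation of `x + 1`.
-/

/-- The arithmetic progression `2·4ⁿℤ + (4ⁿ - 1)`. -/
def prog (n : ℕ) : Set ℤ := {m : ℤ | ∃ q : ℤ, m = 2 * 4 ^ n * q + (4 ^ n - 1)}

section CancelCommMonoidWithZero

variable {α : Type*} [CommMonoidWithZero α] [IsCancelMulZero α] {p u v : α}

theorem emultiplicity_pow_mul_of_not_dvd (hp : Prime p) (hu : ¬p ∣ u) (k : ℕ) :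
    emultiplicity p (p ^ k * u) = k := by
  rw [emultiplicity_mul hp, emultiplicity_pow_self_of_prime hp, emultiplicity_eq_zero.2 hu,
    add_zero]

theorem Prime.eq_of_pow_mul_eq_pow_mul (hp : Prime p) (hu : ¬p ∣ u) (hv : ¬p ∣ v) {a b : ℕ}
    (h : p ^ a * u = p ^ b * v) : a = b := by
  have hmult := emultiplicity_pow_mul_of_not_dvd hp hu a
  rwa [h, emultiplicity_pow_mul_of_not_dvd hp hv b, Nat.cast_inj, eq_comm] at hmult

end CancelCommMonoidWithZero

theorem exists_add_one_eq_two_pow_mul_odd_of_mem_prog {n : ℕ} {x : ℤ} (hx : x ∈ prog n) :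
    ∃ q : ℤ, x + 1 = 2 ^ (2 * n) * (2 * q + 1) := by
  obtain ⟨q, rfl⟩ := hx
  exact ⟨q, by rw [pow_mul]; ring⟩

/-- The progressions `2·4ⁿℤ + (4ⁿ - 1)`, `n ≥ 0`, are pairwise disjoint. -/
theorem prog_pairwise_disjoint :
    ∀ m n : ℕ, m ≠ n → Disjoint (prog m) (prog n) := by
  intro m n hmn
  refine Set.disjoint_left.2 fun x hxm hxn => hmn ?_
  obtain ⟨q, hq⟩ := exists_add_one_eq_two_pow_mul_odd_of_mem_prog hxm
  obtain ⟨r, hr⟩ := exists_add_one_eq_two_pow_mul_odd_of_mem_prog hxn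
  have hodd (s : ℤ) : ¬(2 : ℤ) ∣ 2 * s + 1 := by omega
  have hexp := Int.prime_two.eq_of_pow_mul_eq_pow_mul (hodd q) (hodd r) (hq.symm.trans hr)
  omega
end

section
/- Define Λ = ⋃_{n ≥ 0} (2·4ⁿ ℤ + (4ⁿ − 1)) and Δ = Λ ∪ (−Λ). Then Δ is the disjoint union of 2ℤ and the sets Δ_n := (2·4ⁿ ℤ + (4ⁿ − 1)) ∪ (2·4ⁿ ℤ + (1 − 4ⁿ)) for n ≥ 1; that is, Δ = 2ℤ ∪ ⋃_{n≥1} Δ_n, the sets 2ℤ and Δ_n (n ≥ 1) are pairwise disjoint, and their union is Δ. -/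
/-- The set `Λ` of left endpoints of `a`'s in the period doubling sequence. -/
def lam : Set ℤ := ⋃ n : ℕ, prog n

/-- The symmetric set `Δ = Λ ∪ (-Λ)`. -/
def delta : Set ℤ := lam ∪ (-lam)

/-- The layer `Δ_n = (2·4ⁿℤ + (4ⁿ - 1)) ∪ (2·4ⁿℤ + (1 - 4ⁿ))`, for `n ≥ 1`. -/
def deltaN (n : ℕ) : Set ℤ :=
  prog n ∪ {m : ℤ | ∃ q : ℤ, m = 2 * 4 ^ n * q + (1 - 4 ^ n)}

/-!
An integer `x` lies in `2·4ⁿℤ + (4ⁿ - 1)` exactly when `x + 1` is `4ⁿ` times an odd number, so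
these progressions are pairwise disjoint, and so are their negatives. For `n ≥ 1` a point of the
`n`-th progression has `x ≡ -1 (mod 4)` and a point of a negated one has `x ≡ 1 (mod 4)`, which
separates the two halves of the layers `Δ_n`. The progression for `n = 0` is `2ℤ`, which is
symmetric, so it contributes only once to `Δ`.
-/

open Set

lemma prog_zero : prog 0 = {m : ℤ | ∃ q : ℤ, m = 2 * q} := by
  ext x
  simp [prog]

lemma neg_prog_zero : -prog 0 = prog 0 := by
  ext x
  simp only [prog_zero, mem_neg, mem_ofPred_eq]
  exact ⟨fun ⟨q, hq⟩ => ⟨-q, by linarith⟩, fun ⟨q, hq⟩ => ⟨-q, by linarith⟩⟩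

lemma deltaN_eq (n : ℕ) : deltaN n = prog n ∪ -prog n := by
  ext x
  simp only [deltaN, prog, mem_union, mem_neg, mem_ofPred_eq]
  exact or_congr_right ⟨fun ⟨q, hq⟩ => ⟨-q, by linarith⟩, fun ⟨q, hq⟩ => ⟨-q, by linarith⟩⟩

lemma delta_eq : delta = prog 0 ∪ ⋃ n : ℕ, deltaN (n + 1) := by
  rw [delta, lam, iUnion_neg, ← union_iUnion_nat_succ (fun n => prog n),
    ← union_iUnion_nat_succ (fun n => -prog n), neg_prog_zero, ← union_union_distrib_left]
  simp only [deltaN_eq, iUnion_union_distrib]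

lemma pow_dvd_and_not_dvd_of_mem_prog {n : ℕ} {x : ℤ} (hx : x ∈ prog n) :
    4 ^ n ∣ x + 1 ∧ ¬ 2 * 4 ^ n ∣ x + 1 := by
  obtain ⟨q, rfl⟩ := hx
  rw [show 2 * 4 ^ n * q + (4 ^ n - 1) + 1 = 4 ^ n * (2 * q + 1) by ring]
  refine ⟨dvd_mul_right _ _, fun h => ?_⟩
  rw [mul_comm 2] at h
  have h_odd_even : (2 : ℤ) ∣ 2 * q + 1 := (mul_dvd_mul_iff_left (by positivity)).mp h
  omega

lemma four_dvd_of_mem_prog {n : ℕ} (hn : 1 ≤ n) {x : ℤ} (hx : x ∈ prog n) : 4 ∣ x + 1 :=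
  (dvd_pow_self 4 (by omega)).trans (pow_dvd_and_not_dvd_of_mem_prog hx).1

lemma disjoint_prog {m n : ℕ} (hmn : m ≠ n) : Disjoint (prog m) (prog n) := by
  wlog h : m < n generalizing m n
  · exact (this hmn.symm (by omega)).symm
  refine disjoint_left.mpr fun x hxm hxn => (pow_dvd_and_not_dvd_of_mem_prog hxm).2 ?_
  calc (2 : ℤ) * 4 ^ m ∣ 4 ^ (m + 1) := ⟨2, by ring⟩
    _ ∣ 4 ^ n := pow_dvd_pow 4 h
    _ ∣ x + 1 := (pow_dvd_and_not_dvd_of_mem_prog hxn).1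

lemma disjoint_neg_prog {m n : ℕ} (hmn : m ≠ n) : Disjoint (-prog m) (-prog n) :=
  (disjoint_prog hmn).preimage Neg.neg

lemma disjoint_prog_neg_prog {m n : ℕ} (hm : 1 ≤ m) (hn : 1 ≤ n) :
    Disjoint (prog m) (-prog n) := by
  refine disjoint_left.mpr fun x hxm hxn => ?_
  obtain ⟨a, ha⟩ := four_dvd_of_mem_prog hm hxm
  obtain ⟨b, hb⟩ := four_dvd_of_mem_prog hn hxn
  omega

lemma disjoint_deltaN {m n : ℕ} (hm : 1 ≤ m) (hn : 1 ≤ n) (hmn : m ≠ n) :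
    Disjoint (deltaN m) (deltaN n) := by
  simp only [deltaN_eq, disjoint_union_left, disjoint_union_right]
  exact ⟨⟨disjoint_prog hmn, (disjoint_prog_neg_prog hn hm).symm⟩,
    disjoint_prog_neg_prog hm hn, disjoint_neg_prog hmn⟩

lemma disjoint_prog_zero_deltaN {n : ℕ} (hn : 1 ≤ n) : Disjoint (prog 0) (deltaN n) := by
  rw [deltaN_eq, disjoint_union_right]
  refine ⟨disjoint_prog (by omega), ?_⟩
  simpa only [neg_prog_zero] using disjoint_neg_prog (by omega : 0 ≠ n)

/-- `Δ` is the disjoint union of `2ℤ` and the layers `Δ_n`, `n ≥ 1`. -/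
theorem delta_decomposition :
    (delta = {m : ℤ | ∃ q : ℤ, m = 2 * q} ∪ ⋃ n : ℕ, deltaN (n + 1)) ∧
    (∀ n : ℕ, 1 ≤ n → Disjoint {m : ℤ | ∃ q : ℤ, m = 2 * q} (deltaN n)) ∧
    (∀ m n : ℕ, 1 ≤ m → 1 ≤ n → m ≠ n → Disjoint (deltaN m) (deltaN n)) := by
  rw [← prog_zero]
  exact ⟨delta_eq, fun n hn => disjoint_prog_zero_deltaN hn,
    fun m n hm hn hmn => disjoint_deltaN hm hn hmn⟩
end
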